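/- arXiv:math/0503429 — 2 statements merged into one kernel-verified Lean document; each statement's English description precedes it below -/
import Mathlib

section
/- Let e₁, e₂ be two non-parallel lines in ℝ² moving with constant velocity vectors v₁, v₂ respectively, where each line at time t is e_i(t) = e_i + t·v_i and v_i is orthogonal to e_i. Then the trajectory t ↦ p(t) of the intersection point e₁(t) ∩ e₂(t) satisfies p(t) = p(0) + t·w, where w = v[v₁,v₂] is the unique vector with ⟨w,v₁⟩ = |v₁|² and ⟨w,v₂⟩ = |v₂|². -/
open scoped RealInnerProductSpace

noncomputable section

/-- Two-dimensional Euclidean space. -/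
abbrev E2 := EuclideanSpace ℝ (Fin 2)

/-- let `e₁, e₂` be two non-parallel lines in `ℝ²` moving with constant normal
velocities `v₁, v₂`: at time `t` the line `eᵢ(t)` is `{x : ⟨x, vᵢ⟩ = cᵢ + t|vᵢ|²}` (i.e. the
line orthogonal to `vᵢ` translating at velocity `vᵢ`).  If `p t` is the intersection point
`e₁(t) ∩ e₂(t)` and `w` is the unique vector with `⟨w, v₁⟩ = |v₁|²` and `⟨w, v₂⟩ = |v₂|²`,
then `p t = p 0 + t • w` for all `t`. -/
theorem stmt5 (v₁ v₂ : E2) (hind : LinearIndependent ℝ ![v₁, v₂]) (c₁ c₂ : ℝ)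
    (p : ℝ → E2)
    (hp₁ : ∀ t, ⟪p t, v₁⟫ = c₁ + t * ‖v₁‖ ^ 2)
    (hp₂ : ∀ t, ⟪p t, v₂⟫ = c₂ + t * ‖v₂‖ ^ 2)
    (w : E2) (hw₁ : ⟪w, v₁⟫ = ‖v₁‖ ^ 2) (hw₂ : ⟪w, v₂⟫ = ‖v₂‖ ^ 2) :
    ∀ t, p t = p 0 + t • w := by
  intro t
  set x : E2 := p t - (p 0 + t • w) with hxdef
  have h1 : ⟪x, v₁⟫ = 0 := by
    simp only [hxdef, inner_sub_left, inner_add_left, inner_smul_left, hp₁ 0, hp₁ t, hw₁, starRingEnd_apply, star_trivial]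
    ring
  have h2 : ⟪x, v₂⟫ = 0 := by
    simp only [hxdef, inner_sub_left, inner_add_left, inner_smul_left, hp₂ 0, hp₂ t, hw₂, starRingEnd_apply, star_trivial]
    ring
  have hspan : Submodule.span ℝ (Set.range ![v₁, v₂]) = ⊤ := by
    apply LinearIndependent.span_eq_top_of_card_eq_finrank hind
    simp [finrank_euclideanSpace]
  have hx : ∀ y : E2, ⟪x, y⟫ = 0 := by
    intro y
    have hy : y ∈ Submodule.span ℝ (Set.range ![v₁, v₂]) := hspan ▸ Submodule.mem_top
    induction hy using Submodule.span_induction with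
    | mem z hz =>
      obtain ⟨i, rfl⟩ := hz
      fin_cases i
      · simpa using h1
      · simpa using h2
    | zero => simp
    | add a b _ _ ha hb => rw [inner_add_right, ha, hb, add_zero]
    | smul r a _ ha => rw [inner_smul_right, ha, mul_zero]
  have : x = 0 := by
    have := hx x
    rwa [inner_self_eq_zero] at this
  exact sub_eq_zero.mp this
end
end

section
/- Let e₁, e₂, e₃ be three pairwise non-parallel lines through a common point x ∈ ℝ² with unit normals n₁, n₂, n₃ (each n_i pointing outward of the triangle formed after perturbation), moving with velocities v₁, v₂, v₃ ∈ ℝ². If the stability condition ⟨v_i, n_i⟩ > ⟨v[v_j, v_k], n_i⟩ holds for one choice of distinct indices (i, j, k), then it holds for all choices of distinct (i, j, k), where v[v_j, v_k] is the unique vector w with ⟨w, v_j⟩ = |v_j|² and ⟨w, v_k⟩ = |v_k|². -/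
/-!
Write `nᵢ = cᵢ vᵢ` and `aᵢ = λᵢ cᵢ`, so that `∑ aᵢ vᵢ = 0`. Pairing this relation with `wᵢ`, whose
inner products with the `vⱼ`, `j ≠ i`, are prescribed, shows that the weighted stability gap
`λᵢ (⟨vᵢ, nᵢ⟩ - ⟨wᵢ, nᵢ⟩) = aᵢ ⟨vᵢ - wᵢ, vᵢ⟩` equals `∑ⱼ aⱼ ‖vⱼ‖²`, a quantity independent of `i`.
As the weights `λᵢ` are positive, the gaps all have the same sign.
-/

open scoped RealInnerProductSpace

noncomputable section

section

variable {ι F : Type*} [Fintype ι] [NormedAddCommGroup F] [InnerProductSpace ℝ F]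

theorem mul_inner_sub_self_eq_sum_mul_norm_sq {a : ι → ℝ} {v w : ι → F}
    (hsum : ∑ m, a m • v m = 0) {i : ι} (hw : ∀ m, m ≠ i → ⟪w i, v m⟫ = ‖v m‖ ^ 2) :
    a i * ⟪v i - w i, v i⟫ = ∑ m, a m * ‖v m‖ ^ 2 :=
  calc a i * ⟪v i - w i, v i⟫ = ∑ m, a m * (‖v m‖ ^ 2 - ⟪w i, v m⟫) := by
        rw [Finset.sum_eq_single i (fun m _ hm => by rw [hw m hm, sub_self, mul_zero])
          (fun h => absurd (Finset.mem_univ i) h), inner_sub_left, real_inner_self_eq_norm_sq]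
    _ = ∑ m, a m * ‖v m‖ ^ 2 - ⟪w i, ∑ m, a m • v m⟫ := by
        simp only [mul_sub, Finset.sum_sub_distrib, inner_sum, real_inner_smul_right]
    _ = ∑ m, a m * ‖v m‖ ^ 2 := by rw [hsum, inner_zero_right, sub_zero]

theorem mul_stability_gap_eq_sum {lam c : ι → ℝ} {v n w : ι → F}
    (hpar : ∀ m, n m = c m • v m) (hsum : ∑ m, lam m • n m = 0) {i : ι}
    (hw : ∀ m, m ≠ i → ⟪w i, v m⟫ = ‖v m‖ ^ 2) :
    lam i * (⟪v i, n i⟫ - ⟪w i, n i⟫) = ∑ m, lam m * c m * ‖v m‖ ^ 2 := by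
  have hsum' : ∑ m, (lam m * c m) • v m = 0 := by
    simpa only [hpar, smul_smul] using hsum
  rw [← mul_inner_sub_self_eq_sum_mul_norm_sq hsum' hw, ← inner_sub_left, hpar,
    real_inner_smul_right]
  ring

end

theorem stmt18_general (v n : Fin 3 → E2)
    (hpar : ∀ i, ∃ c : ℝ, n i = c • v i)
    (hout : ∃ lam : Fin 3 → ℝ, (∀ i, 0 < lam i) ∧ ∑ i, lam i • n i = 0)
    (w : Fin 3 → E2) (hw : ∀ i j, j ≠ i → ⟪w i, v j⟫ = ‖v j‖ ^ 2) :
    (∃ i, ⟪w i, n i⟫ < ⟪v i, n i⟫) → ∀ i, ⟪w i, n i⟫ < ⟪v i, n i⟫ := by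
  rintro ⟨i₀, hi₀⟩ i
  choose c hc using hpar
  obtain ⟨lam, hlam, hsum⟩ := hout
  have hgap := fun j => mul_stability_gap_eq_sum hc hsum (hw j)
  have hpos : 0 < lam i * (⟪v i, n i⟫ - ⟪w i, n i⟫) := by
    rw [hgap i, ← hgap i₀]
    exact mul_pos (hlam i₀) (sub_pos.mpr hi₀)
  exact sub_pos.mp (pos_of_mul_pos_right hpos (hlam i).le)

/-- let `e₁, e₂, e₃` be three pairwise non-parallel lines through a common
point of `ℝ²`, moving with normal velocities `v₁, v₂, v₃` (pairwise linearly independent),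
with unit outward normals `n₁, n₂, n₃` (each `nᵢ` parallel to `vᵢ`; 'outward of the
infinitesimal triangle' means that `0` lies in the interior of the convex hull of the `nᵢ`,
i.e. `∑ λᵢ nᵢ = 0` for some positive `λᵢ`).  Let `w i = v[v_j, v_k]` (for `{i,j,k} = {1,2,3}`)
be the unique vector with `⟨w i, v j⟩ = |v j|²` for both `j ≠ i`.  If the stability condition
`⟨vᵢ, nᵢ⟩ > ⟨v[v_j, v_k], nᵢ⟩` holds for one choice of distinct indices `(i, j, k)`, then it
holds for all such choices. -/
theorem stmt18 (v n : Fin 3 → E2)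
    (hind : ∀ i j, i ≠ j → LinearIndependent ℝ ![v i, v j])
    (hnunit : ∀ i, ‖n i‖ = 1)
    (hpar : ∀ i, ∃ c : ℝ, n i = c • v i)
    (hout : ∃ lam : Fin 3 → ℝ, (∀ i, 0 < lam i) ∧ ∑ i, lam i • n i = 0)
    (w : Fin 3 → E2) (hw : ∀ i j, j ≠ i → ⟪w i, v j⟫ = ‖v j‖ ^ 2) :
    (∃ i, ⟪w i, n i⟫ < ⟪v i, n i⟫) → ∀ i, ⟪w i, n i⟫ < ⟪v i, n i⟫ :=
  stmt18_general v n hpar hout w hw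

end
end
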